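/- arXiv:1704.06990 — 4 statements merged into one kernel-verified Lean document; each statement's English description precedes it below -/
import Mathlib

section
/- Let X, V, E be finite sets with surjections r : X → V and s : E → V, and let p : E → ℝ be a transition probability, i.e. p(e) > 0 for all e and for every v ∈ V, the sum of p(e) over edges e with s(e) = v equals 1. Define R = {(x,y) ∈ X × X : r(x) = r(y)}, the underlying path space X̲ = {(x,a) ∈ X × E : r(x) = s(a)}, and R̲ = {((x,a),(y,b)) ∈ X̲ × X̲ : r(a) = r(b)}, with the matrix algebras C*(R) and C*(R̲) of functions on these relations with matrix multiplication and conjugate-transpose involution. Embed C*(R) into C*(R̲) via j(f)((x,a),(y,b)) = f(x,y) if a = b and 0 otherwise. Then the map Q : C*(R̲) → C*(R) defined by Q(f̲)(x,y) = Σ_{c : s(c) = r(x)} p(c) · f̲((x,c),(y,c)) (for (x,y) ∈ R) is linear, unital, positive, satisfies Q(j(f)·g·j(h)) = f·Q(g)·h for f,h ∈ C*(R) and g ∈ C*(R̲), and is faithful (Q(g*g) = 0 implies g = 0). -/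
open Matrix
open scoped ComplexOrder

lemma sum_dite_subtype' {α M : Type*} [Fintype α] {P : α → Prop} [DecidablePred P]
    [AddCommMonoid M] (F : Subtype P → M) :
    ∑ q : α, (if h : P q then F ⟨q, h⟩ else 0) = ∑ x : Subtype P, F x := by
  have : ∀ x : Subtype P, F x = if h : P ↑x then F ⟨↑x, h⟩ else 0 := by
    intro x; rw [dif_pos x.2]
  rw [Finset.sum_congr rfl (fun x _ => this x),
    ← Finset.sum_subtype (Finset.univ.filter P) (by simp)
      (fun q => if h : P q then F ⟨q, h⟩ else 0)]
  rw [Finset.sum_filter_of_ne]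
  intro q _ hq
  by_contra hP
  exact hq (dif_neg hP)

/-- The path model of a faithful conditional expectation on a finite dimensional
C*-algebra: `Q(f̲)(x,y) = Σ_{s(c)=r(x)} p(c) f̲((x,c),(y,c))` is linear, unital,
positive, satisfies the bimodule property over `C*(R)` (embedded via `j`), and is
faithful. -/
theorem stmt0 {X V E : Type*} [Fintype X] [Fintype V] [Fintype E]
    [DecidableEq X] [DecidableEq V] [DecidableEq E]
    (r : X → V) (s : E → V)
    (hr : Function.Surjective r) (hs : Function.Surjective s)
    (p : E → ℝ) (hppos : ∀ e, 0 < p e)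
    (hpsum : ∀ v : V, ∑ e ∈ Finset.univ.filter (fun e => s e = v), p e = 1)
    (Q : Matrix {xa : X × E // r xa.1 = s xa.2} {xa : X × E // r xa.1 = s xa.2} ℂ →
        Matrix X X ℂ)
    (hQ : ∀ m x y, Q m x y =
        ∑ c : E, if hc : s c = r x ∧ s c = r y then
          (p c : ℂ) * m ⟨(x, c), hc.1.symm⟩ ⟨(y, c), hc.2.symm⟩ else 0)
    (j : Matrix X X ℂ →
        Matrix {xa : X × E // r xa.1 = s xa.2} {xa : X × E // r xa.1 = s xa.2} ℂ)
    (hj : ∀ f xa yb, j f xa yb = if xa.1.2 = yb.1.2 then f xa.1.1 yb.1.1 else 0) :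
    -- Q is linear
    (∀ (a : ℂ) m m', Q (a • m + m') = a • Q m + Q m') ∧
    -- Q is unital
    Q 1 = 1 ∧
    -- Q is positive
    (∀ m, m.PosSemidef → (Q m).PosSemidef) ∧
    -- Q is a C*(R)-bimodule map : Q(j(f)·g·j(h)) = f·Q(g)·h
    (∀ f g h, (∀ x y, r x ≠ r y → f x y = 0) → (∀ x y, r x ≠ r y → h x y = 0) →
      Q (j f * g * j h) = f * Q g * h) ∧
    -- Q is faithful
    (∀ g, Q (gᴴ * g) = 0 → g = 0) := by
  refine ⟨?_, ?_, ?_, ?_, ?_⟩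
  · -- linearity
    intro a m m'
    ext x y
    simp only [hQ, Matrix.add_apply, Matrix.smul_apply, smul_eq_mul, Finset.mul_sum,
      ← Finset.sum_add_distrib]
    refine Finset.sum_congr rfl fun c _ => ?_
    split_ifs with hc
    · ring
    · simp
  · -- unitality
    ext x y
    rw [hQ]
    by_cases hxy : x = y
    · subst hxy
      rw [Matrix.one_apply_eq]
      have h1 : ∀ c : E, (if hc : s c = r x ∧ s c = r x then
          (p c : ℂ) * (1 : Matrix {xa : X × E // r xa.1 = s xa.2}
            {xa : X × E // r xa.1 = s xa.2} ℂ) ⟨(x, c), hc.1.symm⟩ ⟨(x, c), hc.2.symm⟩ else 0)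
          = if s c = r x then (p c : ℂ) else 0 := by
        intro c
        split_ifs with hc h2 h2
        · rw [Matrix.one_apply_eq, mul_one]
        · exact absurd hc.1 h2
        · exact absurd ⟨h2, h2⟩ hc
        · rfl
      rw [Finset.sum_congr rfl (fun c _ => h1 c), ← Finset.sum_filter]
      rw [← Complex.ofReal_sum, hpsum (r x), Complex.ofReal_one]
    · rw [Matrix.one_apply_ne hxy]
      refine Finset.sum_eq_zero fun c _ => ?_
      split_ifs with hc
      · rw [Matrix.one_apply_ne, mul_zero]
        intro he
        exact hxy (congrArg (Prod.fst ∘ Subtype.val) he)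
      · rfl
  · -- positivity
    intro m hm
    set P : E → Matrix {xa : X × E // r xa.1 = s xa.2} X ℂ := fun c xa x =>
      if xa.1 = (x, c) then (Real.sqrt (p c) : ℂ) else 0 with hP
    have key : Q m = ∑ c : E, (P c)ᴴ * m * (P c) := by
      ext x y
      rw [hQ, Matrix.sum_apply]
      refine Finset.sum_congr rfl fun c _ => ?_
      have inner : ∀ yb : {xa : X × E // r xa.1 = s xa.2},
          (∑ xa : {xa : X × E // r xa.1 = s xa.2}, star (P c xa x) * m xa yb)
          = if h : r x = s c then (Real.sqrt (p c) : ℂ) * m ⟨(x, c), h⟩ yb else 0 := by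
        intro yb
        rw [← sum_dite_subtype' (fun xa : {xa : X × E // r xa.1 = s xa.2} =>
          star (P c xa x) * m xa yb)]
        rw [Fintype.sum_eq_single (x, c)]
        · split_ifs with h
          · simp [hP, Complex.conj_ofReal]
          · rfl
        · intro q hq
          simp [hP, hq]
      have : ((P c)ᴴ * m * P c) x y =
          ∑ yb : {xa : X × E // r xa.1 = s xa.2},
            (∑ xa : {xa : X × E // r xa.1 = s xa.2}, star (P c xa x) * m xa yb) * P c yb y := by
        simp [Matrix.mul_apply, Matrix.conjTranspose_apply]
      rw [this]
      simp only [inner]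
      rw [← sum_dite_subtype' (fun yb : {xa : X × E // r xa.1 = s xa.2} =>
        (if h : r x = s c then (Real.sqrt (p c) : ℂ) * m ⟨(x, c), h⟩ yb else 0) * P c yb y)]
      rw [Fintype.sum_eq_single (y, c)]
      · by_cases h1 : r x = s c <;> by_cases h2 : r y = s c
        · rw [dif_pos h2, dif_pos h1, dif_pos ⟨h1.symm, h2.symm⟩]
          simp only [hP, if_pos rfl, if_true]
          rw [mul_right_comm, ← Complex.ofReal_mul, Real.mul_self_sqrt (hppos c).le]
        · rw [dif_neg h2, dif_neg (fun hc => h2 hc.2.symm)]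
        · rw [dif_pos h2, dif_neg h1, zero_mul, dif_neg (fun hc => h1 hc.1.symm)]
        · rw [dif_neg h2, dif_neg (fun hc => h1 hc.1.symm)]
      · intro q hq
        simp [hP, hq]
    rw [key]
    refine Finset.sum_induction _ _ (fun a b ha hb => ha.add hb) ?_ ?_
    · exact Matrix.PosSemidef.zero
    · exact fun c _ => hm.conjTranspose_mul_mul_same (P c)
  · -- bimodule property
    intro f g h hf hh
    have hL : ∀ (A : Matrix {xa : X × E // r xa.1 = s xa.2} {xa : X × E // r xa.1 = s xa.2} ℂ)
        (x : X) (c : E) (hx : r x = s c) (b : {xa : X × E // r xa.1 = s xa.2}),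
        (j f * A) ⟨(x, c), hx⟩ b
          = ∑ z : X, if hz : r z = s c then f x z * A ⟨(z, c), hz⟩ b else 0 := by
      intro A x c hx b
      rw [Matrix.mul_apply,
        ← sum_dite_subtype' (fun zc : {xa : X × E // r xa.1 = s xa.2} =>
          j f ⟨(x, c), hx⟩ zc * A zc b),
        Fintype.sum_prod_type]
      refine Finset.sum_congr rfl fun z _ => ?_
      rw [Fintype.sum_eq_single c]
      · split_ifs with hz
        · rw [hj]; simp
        · rfl
      · intro d hd
        split_ifs with hz
        · rw [hj]; simp [Ne.symm hd]
        · rfl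
    have hR : ∀ (A : Matrix {xa : X × E // r xa.1 = s xa.2} {xa : X × E // r xa.1 = s xa.2} ℂ)
        (y : X) (c : E) (hy : r y = s c) (a : {xa : X × E // r xa.1 = s xa.2}),
        (A * j h) a ⟨(y, c), hy⟩
          = ∑ w : X, if hw : r w = s c then A a ⟨(w, c), hw⟩ * h w y else 0 := by
      intro A y c hy a
      rw [Matrix.mul_apply,
        ← sum_dite_subtype' (fun wd : {xa : X × E // r xa.1 = s xa.2} =>
          A a wd * j h wd ⟨(y, c), hy⟩),
        Fintype.sum_prod_type]
      refine Finset.sum_congr rfl fun w _ => ?_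
      rw [Fintype.sum_eq_single c]
      · split_ifs with hw
        · rw [hj]; simp
        · rfl
      · intro d hd
        split_ifs with hw
        · rw [hj]; simp [hd]
        · rfl
    ext x y
    have hT : Q (j f * g * j h) x y
        = ∑ c : E, ∑ z : X, ∑ w : X, (if hzw : r z = s c ∧ r w = s c then
            (p c : ℂ) * (f x z * g ⟨(z, c), hzw.1⟩ ⟨(w, c), hzw.2⟩ * h w y)
              * (if r x = s c ∧ r y = s c then 1 else 0) else 0) := by
      rw [hQ]
      refine Finset.sum_congr rfl fun c _ => ?_
      by_cases hc : s c = r x ∧ s c = r y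
      · rw [dif_pos hc, mul_assoc (j f) g (j h), hL (g * j h) x c hc.1.symm, Finset.mul_sum]
        refine Finset.sum_congr rfl fun z _ => ?_
        by_cases hz : r z = s c
        · rw [dif_pos hz, hR g y c hc.2.symm ⟨(z, c), hz⟩, Finset.mul_sum, Finset.mul_sum]
          refine Finset.sum_congr rfl fun w _ => ?_
          by_cases hw : r w = s c
          · rw [dif_pos hw, dif_pos ⟨hz, hw⟩, if_pos ⟨hc.1.symm, hc.2.symm⟩, mul_one]
            ring
          · rw [dif_neg hw, dif_neg (fun hzw => hw hzw.2), mul_zero, mul_zero]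
        · rw [dif_neg hz, mul_zero]
          symm
          exact Finset.sum_eq_zero fun w _ => dif_neg (fun hzw => hz hzw.1)
      · rw [dif_neg hc]
        symm
        refine Finset.sum_eq_zero fun z _ => Finset.sum_eq_zero fun w _ => ?_
        split_ifs with hzw hxy
        · exact absurd ⟨hxy.1.symm, hxy.2.symm⟩ hc
        · rw [mul_zero]
        · rfl
    rw [hT]
    have hT2 : (f * Q g * h) x y
        = ∑ z : X, ∑ w : X, ∑ c : E, (if hzw : r z = s c ∧ r w = s c then
            (p c : ℂ) * (f x z * g ⟨(z, c), hzw.1⟩ ⟨(w, c), hzw.2⟩ * h w y)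
              * (if r x = s c ∧ r y = s c then 1 else 0) else 0) := by
      simp only [Matrix.mul_apply, Finset.sum_mul]
      rw [Finset.sum_comm]
      refine Finset.sum_congr rfl fun z _ => Finset.sum_congr rfl fun w _ => ?_
      rw [hQ, Finset.mul_sum, Finset.sum_mul]
      refine Finset.sum_congr rfl fun c _ => ?_
      by_cases hzw : r z = s c ∧ r w = s c
      · rw [dif_pos ⟨hzw.1.symm, hzw.2.symm⟩, dif_pos hzw]
        by_cases hfz : f x z = 0
        · simp [hfz]
        by_cases hhw : h w y = 0
        · simp [hhw]
        have hxz : r x = r z := by by_contra hne; exact hfz (hf x z hne)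
        have hyw : r w = r y := by by_contra hne; exact hhw (hh w y hne)
        rw [if_pos ⟨hxz.trans hzw.1, hyw.symm.trans hzw.2⟩, mul_one]
        ring
      · rw [dif_neg (fun hc => hzw ⟨hc.1.symm, hc.2.symm⟩), dif_neg hzw, mul_zero, zero_mul]
    rw [hT2, Finset.sum_comm]
    exact Finset.sum_congr rfl fun z _ => Finset.sum_comm
  · -- faithfulness
    intro g hg
    ext zc yb
    obtain ⟨⟨y, c⟩, hy⟩ := yb
    have hyy : (∑ c : E, if hc : s c = r y ∧ s c = r y then
        (p c : ℂ) * (gᴴ * g) ⟨(y, c), hc.1.symm⟩ ⟨(y, c), hc.2.symm⟩ else 0) = 0 := by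
      rw [← hQ]
      exact congrFun (congrFun hg y) y
    have hterm : ∀ c : E, (0:ℂ) ≤ (if hc : s c = r y ∧ s c = r y then
        (p c : ℂ) * (gᴴ * g) ⟨(y, c), hc.1.symm⟩ ⟨(y, c), hc.2.symm⟩ else 0) := by
      intro c
      split_ifs with hc
      · refine mul_nonneg (Complex.zero_le_real.mpr (hppos c).le) ?_
        rw [Matrix.mul_apply]
        refine Finset.sum_nonneg fun zc _ => ?_
        rw [Matrix.conjTranspose_apply]
        exact star_mul_self_nonneg _
      · exact le_refl _
    have hzero := (Finset.sum_eq_zero_iff_of_nonneg (fun c _ => hterm c)).mp hyy c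
        (Finset.mem_univ c)
    rw [dif_pos ⟨hy.symm, hy.symm⟩] at hzero
    have hdiag : (gᴴ * g) ⟨(y, c), hy⟩ ⟨(y, c), hy⟩ = 0 := by
      rcases mul_eq_zero.mp hzero with h | h
      · exact absurd h (by exact_mod_cast (hppos c).ne')
      · exact h
    simp only [Matrix.mul_apply, Matrix.conjTranspose_apply] at hdiag
    have hcols := (Finset.sum_eq_zero_iff_of_nonneg
        (fun wc _ => star_mul_self_nonneg (g wc ⟨(y, c), hy⟩))).mp hdiag zc (Finset.mem_univ zc)
    rcases mul_eq_zero.mp hcols with h | h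
    · simpa using star_eq_zero.mp h
    · simpa using h
end

section
/- Let M be a finite-dimensional C*-algebra realized as C*(R) for a finite equivalence relation R on a finite set X, with fixed full matrix unit (e̲(x,y))_{(x,y)∈R}. Suppose S ⊆ R is a subequivalence relation on X and (e(x,y))_{(x,y)∈S} is a partial matrix unit in M with e(x,x) = e̲(x,x) for all x (i.e. e(x,y)* = e(y,x), e(x,y)e(y,z) = e(x,z) for composable pairs in S). Then there exists a full matrix unit (f(x,y))_{(x,y)∈R} extending (e(x,y))_{(x,y)∈S}, i.e. f(x,y) = e(x,y) for (x,y) ∈ S, f satisfies the matrix unit relations on all of R, and f(x,x) = e̲(x,x). -/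
open Matrix

/-- Extension of partial matrix units: if `S ⊆ R` are equivalence relations on a
finite set `X`, `ē` is a full matrix unit indexed by `R` (with `Σ_x ē(x,x) = 1`),
and `e` is a partial matrix unit indexed by `S` with `e(x,x) = ē(x,x)`, then `e`
extends to a full matrix unit `f` indexed by `R` with the same diagonal. -/
theorem stmt3 {X : Type*} [Fintype X] [DecidableEq X]
    (R S : X → X → Prop)
    (hRrefl : ∀ x, R x x) (hRsymm : ∀ {x y}, R x y → R y x)
    (hRtrans : ∀ {x y z}, R x y → R y z → R x z)
    (hSrefl : ∀ x, S x x) (hSsymm : ∀ {x y}, S x y → S y x)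
    (hStrans : ∀ {x y z}, S x y → S y z → S x z)
    (hsub : ∀ x y, S x y → R x y)
    (ebar : X → X → Matrix X X ℂ)
    (hbstar : ∀ x y, R x y → (ebar x y)ᴴ = ebar y x)
    (hbmul : ∀ x y z, R x y → R y z → ebar x y * ebar y z = ebar x z)
    (hborth : ∀ x y y' z, R x y → R y' z → y ≠ y' → ebar x y * ebar y' z = 0)
    (hbsum : ∑ x : X, ebar x x = 1)
    (e : X → X → Matrix X X ℂ)
    (hestar : ∀ x y, S x y → (e x y)ᴴ = e y x)
    (hemul : ∀ x y z, S x y → S y z → e x y * e y z = e x z)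
    (heorth : ∀ x y y' z, S x y → S y' z → y ≠ y' → e x y * e y' z = 0)
    (hediag : ∀ x, e x x = ebar x x) :
    ∃ f : X → X → Matrix X X ℂ,
      (∀ x y, S x y → f x y = e x y) ∧
      (∀ x, f x x = ebar x x) ∧
      (∀ x y, R x y → (f x y)ᴴ = f y x) ∧
      (∀ x y z, R x y → R y z → f x y * f y z = f x z) ∧
      (∀ x y y' z, R x y → R y' z → y ≠ y' → f x y * f y' z = 0) := by
  classical
  -- S-class representatives
  let sS : Setoid X := ⟨S, ⟨fun x => hSrefl x, fun h => hSsymm h, fun h h' => hStrans h h'⟩⟩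
  let σ : X → X := fun x => (Quotient.mk sS x).out
  have hσS : ∀ x, S (σ x) x := fun x => Quotient.mk_out (s := sS) x
  have hσeq : ∀ {x y}, S x y → σ x = σ y := fun h =>
    congrArg Quotient.out (Quotient.sound (s := sS) h)
  -- R-class representatives, chosen among σ-fixed points
  let sR : Setoid X := ⟨R, ⟨fun x => hRrefl x, fun h => hRsymm h, fun h h' => hRtrans h h'⟩⟩
  let ρ : X → X := fun x => σ ((Quotient.mk sR x).out)
  have hρR : ∀ x, R x (ρ x) := by
    intro x
    have h1 : R ((Quotient.mk sR x).out) x := Quotient.mk_out (s := sR) x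
    exact hRtrans (hRsymm h1) (hRsymm (hsub _ _ (hσS _)))
  have hρeq : ∀ {x y}, R x y → ρ x = ρ y := fun h =>
    congrArg (fun q => σ (Quotient.out q)) (Quotient.sound (s := sR) h)
  have hρσ : ∀ x, σ (ρ x) = ρ x := fun x => hσeq (hσS _)
  -- connectors
  let v : X → Matrix X X ℂ := fun x => e x (σ x) * ebar (σ x) (ρ x)
  have hSxσ : ∀ x, S x (σ x) := fun x => hSsymm (hσS x)
  have hRσρ : ∀ x, R (σ x) (ρ x) := fun x => hRtrans (hsub _ _ (hσS x)) (hρR x)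
  have hvH : ∀ x, (v x)ᴴ = ebar (ρ x) (σ x) * e (σ x) x := by
    intro x
    show (e x (σ x) * ebar (σ x) (ρ x))ᴴ = _
    rw [conjTranspose_mul, hbstar _ _ (hRσρ x), hestar _ _ (hSxσ x)]
  have hvvH : ∀ x, v x * (v x)ᴴ = ebar x x := by
    intro x
    rw [hvH]
    show e x (σ x) * ebar (σ x) (ρ x) * (ebar (ρ x) (σ x) * e (σ x) x) = _
    rw [mul_assoc, ← mul_assoc (ebar (σ x) (ρ x)),
      hbmul _ _ _ (hRσρ x) (hRsymm (hRσρ x)), ← hediag,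
      hemul _ _ _ (hSrefl (σ x)) (hσS x), hemul _ _ _ (hSxσ x) (hσS x), hediag]
  have hHvv : ∀ x, (v x)ᴴ * v x = ebar (ρ x) (ρ x) := by
    intro x
    rw [hvH]
    show ebar (ρ x) (σ x) * e (σ x) x * (e x (σ x) * ebar (σ x) (ρ x)) = _
    rw [mul_assoc, ← mul_assoc (e (σ x) x), hemul _ _ _ (hσS x) (hSxσ x),
      hediag, hbmul (σ x) (σ x) (ρ x) (hRrefl _) (hRσρ x),
      hbmul (ρ x) (σ x) (ρ x) (hRsymm (hRσρ x)) (hRσρ x)]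
  have horthv : ∀ x y, x ≠ y → (v x)ᴴ * v y = 0 := by
    intro x y hxy
    rw [hvH]
    show ebar (ρ x) (σ x) * e (σ x) x * (e y (σ y) * ebar (σ y) (ρ y)) = 0
    rw [mul_assoc, ← mul_assoc (e (σ x) x),
      heorth _ _ _ _ (hσS x) (hSxσ y) hxy, zero_mul, mul_zero]
  -- the extension
  refine ⟨fun x y => if R x y then v x * (v y)ᴴ else 0, ?_, ?_, ?_, ?_, ?_⟩
  · intro x y hS
    beta_reduce
    rw [if_pos (hsub _ _ hS), hvH]
    show e x (σ x) * ebar (σ x) (ρ x) * (ebar (ρ y) (σ y) * e (σ y) y) = _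
    rw [← hσeq hS, ← hρeq (hsub _ _ hS), mul_assoc, ← mul_assoc (ebar (σ x) (ρ x)),
      hbmul _ _ _ (hRσρ x) (hRsymm (hRσρ x)), ← hediag,
      hemul (σ x) (σ x) y (hSrefl _) (hStrans (hσS x) hS),
      hemul x (σ x) y (hSxσ x) (hStrans (hσS x) hS)]
  · intro x
    beta_reduce
    rw [if_pos (hRrefl x), hvvH]
  · intro x y hR
    beta_reduce
    rw [if_pos hR, if_pos (hRsymm hR), conjTranspose_mul, conjTranspose_conjTranspose]
  · intro x y z hxy hyz
    have key : ∀ w, v w * ebar (ρ w) (ρ w) = v w := by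
      intro w
      show e w (σ w) * ebar (σ w) (ρ w) * ebar (ρ w) (ρ w) = e w (σ w) * ebar (σ w) (ρ w)
      rw [mul_assoc, hbmul _ _ _ (hRσρ w) (hRrefl _)]
    beta_reduce
    rw [if_pos hxy, if_pos hyz, if_pos (hRtrans hxy hyz), mul_assoc,
      ← mul_assoc ((v y)ᴴ), hHvv, ← mul_assoc, ← hρeq hxy, key]
  · intro x y y' z hxy hyz hne
    beta_reduce
    rw [if_pos hxy, if_pos hyz, mul_assoc, ← mul_assoc ((v y)ᴴ),
      horthv _ _ hne, zero_mul, mul_zero]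
end

section
/- Let (V,E) be a Bratteli diagram with random walk (p, ν_0) of full support, Markov measure μ on path space X and tail equivalence relation R. If f ∈ L^∞(X, μ) is a bounded nonnegative tail-invariant function (f(x) = f(y) whenever x, y are tail equivalent, μ-a.e.), define for each n the function h_n on V(n) by h_n·ν_n = pushforward of f·μ under r_n : X → V(n), r_n(e_1e_2…) = r(e_n) (i.e. h_n is the Radon–Nikodym derivative of (r_n)_*(fμ) with respect to ν_n). Then (h_n) is a bounded harmonic sequence: h_{n−1}(v) = Σ_{s(e)=v} p_n(e)·h_n(r(e)) for all v, and sup_n ‖h_n‖_{L^∞(ν_n)} ≤ ‖f‖_∞. -/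
/-!
Write `I_n(v) = ∫_{s(x_n) = v} f dμ` and `h_n = I_n / ν_n`. By induction on `n`, splitting
according to the edges that enter `s(z_{n+1})` and using `ν_{n+1} = ν_n p_n`, the cylinder fixing
the edges `z_n, …, z_{m-1}` has measure `ν_n(s z_n) ∏ p(z_i)`; in particular
`μ {s(x_n) = v} = ν_n(v)`, which gives `0 ≤ h_n ≤ C`. Splitting `{s(x_n) = v}` according to the
edge `x_n`, harmonicity reduces to
`ν_{n+1}(r e) ∫_{x_n = e} f dμ = p(e) ν_n(s e) ∫_{s(x_{n+1}) = r e} f dμ`.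
Replacing the first `n + 1` edges of `x` by those of a fixed path ending at `r(x_n)` leaves `f`
unchanged by tail invariance, and the cylinder formula shows that this map pushes the two
restricted measures forward to proportional measures: they agree on the π-system of prefix
cylinders.
-/

open MeasureTheory Finset
open scoped ENNReal

section Fiber

variable {α β γ : Type*} [MeasurableSpace α] {μ : Measure α}

theorem setLIntegral_fiber_eq_sum [MeasurableSpace β] [MeasurableSingletonClass β]
    {g : α → β} (hg : Measurable g) (π : β → γ) (c : γ) [Fintype {b // π b = c}]
    (F : α → ℝ≥0∞) :
    ∫⁻ a in {a | π (g a) = c}, F a ∂μ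
      = ∑ b : {b // π b = c}, ∫⁻ a in {a | g a = b}, F a ∂μ := by
  have hunion : {a | π (g a) = c} = ⋃ b : {b // π b = c}, {a | g a = b} := by
    ext a
    simp
  rw [hunion, lintegral_iUnion (s := fun b : {b // π b = c} => {a | g a = b})
    (fun b => hg (measurableSet_singleton _)), tsum_fintype]
  intro b b' hne
  exact Set.disjoint_left.2 fun a ha ha' => hne (Subtype.ext (ha.symm.trans ha'))

theorem measure_inter_fiber_eq_sum [MeasurableSpace β] [MeasurableSingletonClass β]
    {g : α → β} (hg : Measurable g) (π : β → γ) (c : γ) [Fintype {b // π b = c}]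
    {S : Set α} (hS : MeasurableSet S) :
    μ ({a | π (g a) = c} ∩ S) = ∑ b : {b // π b = c}, μ ({a | g a = b} ∩ S) := by
  simpa only [Pi.one_apply, setLIntegral_one, Measure.restrict_apply' hS]
    using setLIntegral_fiber_eq_sum (μ := μ.restrict S) hg π c 1

theorem setLIntegral_ne_top_of_le_ofReal [IsFiniteMeasure μ] {F : α → ℝ≥0∞} {C : ℝ}
    (hFC : ∀ a, F a ≤ ENNReal.ofReal C) (S : Set α) : ∫⁻ a in S, F a ∂μ ≠ ⊤ :=
  (setLIntegral_lt_top_of_le_nnreal (measure_ne_top μ S) ⟨C.toNNReal, fun a _ => hFC a⟩).ne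

end Fiber

theorem weight_pos_of_rec {V E : ℕ → Type} {s : ∀ n, E n → V n} {r : ∀ n, E n → V (n+1)}
    [∀ n (w : V (n+1)), Fintype {e : E n // r n e = w}] {p : ∀ n, E n → ℝ}
    {ν : ∀ n, V n → ℝ} (hrne : ∀ n (w : V (n+1)), Nonempty {e : E n // r n e = w})
    (hppos : ∀ n e, 0 < p n e) (hν₀pos : ∀ v : V 0, 0 < ν 0 v)
    (hνrec : ∀ n (w : V (n+1)),
      ν (n+1) w = ∑ e : {e : E n // r n e = w}, p n e.1 * ν n (s n e.1)) :
    ∀ n v, 0 < ν n v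
  | 0, v => hν₀pos v
  | n+1, w => by
    rw [hνrec]
    have := hrne n w
    exact sum_pos (fun e _ =>
      mul_pos (hppos n e.1) (weight_pos_of_rec hrne hppos hν₀pos hνrec n _)) univ_nonempty

abbrev BratteliPath {V E : ℕ → Type} (s : ∀ n, E n → V n) (r : ∀ n, E n → V (n+1)) :
    Type :=
  {x : (k : ℕ) → E k // ∀ k, r k (x k) = s (k+1) (x (k+1))}

noncomputable def extendForward {E : ℕ → Type} (next : ∀ i, E i → E (i+1)) (n : ℕ)
    (z : ∀ i, E i) : ∀ i, E i
  | 0 => z 0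
  | i+1 => if i + 1 ≤ n then z (i+1) else next i (extendForward next n z i)

theorem extendForward_of_le {E : ℕ → Type} (next : ∀ i, E i → E (i+1)) {n i : ℕ}
    (z : ∀ i, E i) (hi : i ≤ n) : extendForward next n z i = z i := by
  cases i with
  | zero => rfl
  | succ i => exact if_pos hi

theorem extendForward_succ {E : ℕ → Type} (next : ∀ i, E i → E (i+1)) {n i : ℕ}
    (z : ∀ i, E i) (hi : n ≤ i) :
    extendForward next n z (i+1) = next i (extendForward next n z i) :=
  if_neg (by omega)

namespace BratteliPath

variable {V E : ℕ → Type} {s : ∀ n, E n → V n} {r : ∀ n, E n → V (n+1)}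

theorem update_compatible {n : ℕ} {z : ∀ i, E i} {e : E n} (he : r n e = s (n+1) (z (n+1)))
    (hz : ∀ k, n < k → r k (z k) = s (k+1) (z (k+1))) (k : ℕ) (hk : n ≤ k) :
    r k (Function.update z n e k) = s (k+1) (Function.update z n e (k+1)) := by
  rcases hk.eq_or_lt with rfl | hlt
  · simpa using he
  · simpa [Function.update_of_ne hlt.ne', Function.update_of_ne (hlt.trans k.lt_succ_self).ne']
      using hz k hlt

theorem exists_eq_forall_ge (hrne : ∀ n (w : V (n+1)), Nonempty {e : E n // r n e = w})
    (n : ℕ) (z : ∀ i, E i) (hz : ∀ k, n ≤ k → r k (z k) = s (k+1) (z (k+1))) :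
    ∃ y : BratteliPath s r, ∀ i, n ≤ i → y.1 i = z i := by
  induction n generalizing z with
  | zero => exact ⟨⟨z, fun k => hz k k.zero_le⟩, fun _ _ => rfl⟩
  | succ n ih =>
    obtain ⟨⟨e, he⟩⟩ := hrne n (s (n+1) (z (n+1)))
    obtain ⟨y, hy⟩ := ih (Function.update z n e) (update_compatible he fun k hk => hz k hk)
    exact ⟨y, fun i hi => by rw [hy i (by omega), Function.update_of_ne (by omega)]⟩

theorem exists_prepend (hrne : ∀ n (w : V (n+1)), Nonempty {e : E n // r n e = w})
    {n : ℕ} (y : BratteliPath s r) (e : E n) (he : r n e = s (n+1) (y.1 (n+1))) :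
    ∃ y' : BratteliPath s r, y'.1 n = e ∧ ∀ i, n < i → y'.1 i = y.1 i := by
  obtain ⟨y', hy'⟩ :=
    exists_eq_forall_ge hrne n (Function.update y.1 n e) (update_compatible he fun k _ => y.2 k)
  exact ⟨y', by simpa using hy' n le_rfl,
    fun i hi => by rw [hy' i hi.le, Function.update_of_ne hi.ne']⟩

theorem exists_coord_eq (hsne : ∀ n (v : V n), Nonempty {e : E n // s n e = v})
    (hrne : ∀ n (w : V (n+1)), Nonempty {e : E n // r n e = w})
    [Nonempty (BratteliPath s r)] {n : ℕ} (e : E n) :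
    ∃ y : BratteliPath s r, y.1 n = e := by
  let next : ∀ i, E i → E (i+1) := fun i e => (hsne (i+1) (r i e)).some.1
  have hnext : ∀ i e, r i e = s (i+1) (next i e) := fun i e => (hsne (i+1) (r i e)).some.2.symm
  let z := extendForward next n (Function.update (Classical.arbitrary (BratteliPath s r)).1 n e)
  obtain ⟨y, hy⟩ := exists_eq_forall_ge (s := s) hrne n z fun k hk => by
    rw [show z (k+1) = next k (z k) from extendForward_succ _ _ hk]
    exact hnext k (z k)
  refine ⟨y, ?_⟩
  rw [hy n le_rfl, show z n = _ from extendForward_of_le _ _ le_rfl, Function.update_self]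

def cylinder (n m : ℕ) (z : ∀ i, E i) : Set (BratteliPath s r) :=
  {x | ∀ i ∈ Ico n m, x.1 i = z i}

def prefixCylinders : Set (Set (BratteliPath s r)) :=
  {C | ∃ m z, C = cylinder 0 m z}

theorem cylinder_eq_of_mem {n m : ℕ} {z : ∀ i, E i} {y : BratteliPath s r}
    (hy : y ∈ cylinder n m z) : (cylinder n m z : Set (BratteliPath s r)) = cylinder n m y.1 := by
  ext x
  exact forall₂_congr fun i hi => by rw [hy i hi]

theorem cylinder_eq_max (n m : ℕ) (z : ∀ i, E i) :
    (cylinder n m z : Set (BratteliPath s r)) = cylinder n (max m n) z := by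
  ext x
  refine forall_congr' fun i => imp_congr_left ?_
  simp only [mem_Ico]
  omega

theorem cylinder_eq_univ_of_le {n m : ℕ} (h : m ≤ n) (z : ∀ i, E i) :
    (cylinder n m z : Set (BratteliPath s r)) = Set.univ := by
  ext x
  simp only [cylinder, mem_Ico, Set.mem_ofPred_eq, Set.mem_univ, iff_true]
  omega

theorem edge_inter_cylinder {n m : ℕ} (hnm : n < m) (z : ∀ i, E i) {y : BratteliPath s r}
    (hy : ∀ i, n < i → y.1 i = z i) :
    {x : BratteliPath s r | x.1 n = y.1 n} ∩ cylinder (n+1) m z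
      = {x | s n (x.1 n) = s n (y.1 n)} ∩ cylinder n m y.1 := by
  ext x
  simp only [cylinder, Set.mem_inter_iff, Set.mem_ofPred_eq, mem_Ico]
  constructor
  · rintro ⟨hxn, hx⟩
    refine ⟨by rw [hxn], fun i hi => ?_⟩
    rcases hi.1.eq_or_lt with rfl | hlt
    · exact hxn
    · rw [hx i ⟨hlt, hi.2⟩, hy i hlt]
  · rintro ⟨-, hx⟩
    exact ⟨hx n ⟨le_rfl, hnm⟩,
      fun i hi => by rw [hx i ⟨by omega, hi.2⟩, hy i (by omega)]⟩

theorem isPiSystem_prefixCylinders :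
    IsPiSystem (prefixCylinders : Set (Set (BratteliPath s r))) := by
  rintro _ ⟨m₁, z₁, rfl⟩ _ ⟨m₂, z₂, rfl⟩ ⟨y, hy₁, hy₂⟩
  refine ⟨max m₁ m₂, y.1, ?_⟩
  rw [cylinder_eq_of_mem hy₁, cylinder_eq_of_mem hy₂]
  ext x
  simp only [cylinder, Set.mem_inter_iff, Set.mem_ofPred_eq, mem_Ico]
  exact ⟨fun h i hi => (lt_max_iff.1 hi.2).elim (h.1 i ⟨hi.1, ·⟩) (h.2 i ⟨hi.1, ·⟩),
    fun h => ⟨fun i hi => h i ⟨hi.1, by omega⟩, fun i hi => h i ⟨hi.1, by omega⟩⟩⟩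

section ReplacePrefix

variable {n : ℕ} (Q : V (n+1) → BratteliPath s r) (hQ : ∀ w, r n ((Q w).1 n) = w)

include hQ in
def replacePrefix (x : BratteliPath s r) : BratteliPath s r :=
  ⟨fun i => if i ≤ n then (Q (r n (x.1 n))).1 i else x.1 i, fun k => by
    by_cases hk : k + 1 ≤ n
    · simpa [hk, k.le_succ.trans hk] using (Q (r n (x.1 n))).2 k
    · by_cases hkn : k = n
      · subst hkn
        simpa [hQ] using x.2 k
      · simpa [hk, show ¬ k ≤ n by omega] using x.2 k⟩

theorem replacePrefix_of_lt {x : BratteliPath s r} {i : ℕ} (hi : n < i) :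
    (replacePrefix Q hQ x).1 i = x.1 i :=
  if_neg (not_le.2 hi)

theorem replacePrefix_mem_cylinder_iff {x : BratteliPath s r} {w : V (n+1)}
    (hx : r n (x.1 n) = w) {m : ℕ} {z : ∀ i, E i} :
    replacePrefix Q hQ x ∈ cylinder 0 m z
      ↔ (∀ i < m, i ≤ n → (Q w).1 i = z i) ∧ x ∈ cylinder (n+1) m z := by
  simp only [cylinder, replacePrefix, Set.mem_ofPred_eq, mem_Ico, hx]
  constructor
  · intro h
    exact ⟨fun i hi hin => by simpa [hin] using h i ⟨i.zero_le, hi⟩,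
      fun i hi => by simpa [show ¬ i ≤ n by omega] using h i ⟨i.zero_le, hi.2⟩⟩
  · rintro ⟨hQz, hxz⟩ i hi
    split_ifs with hin
    · exact hQz i hi.2 hin
    · exact hxz i ⟨by omega, hi.2⟩

end ReplacePrefix

theorem preimage_replacePrefix_cylinder_inter {n : ℕ} (Q : V (n+1) → BratteliPath s r)
    (hQ : ∀ w, r n ((Q w).1 n) = w) {w : V (n+1)} {T : Set (BratteliPath s r)}
    (hT : ∀ x ∈ T, r n (x.1 n) = w) {m : ℕ} {z : ∀ i, E i}
    (hQz : ∀ i < m, i ≤ n → (Q w).1 i = z i) :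
    replacePrefix Q hQ ⁻¹' cylinder 0 m z ∩ T = T ∩ cylinder (n+1) m z := by
  ext x
  simp only [Set.mem_inter_iff, Set.mem_preimage]
  refine ⟨fun ⟨hx, hxT⟩ => ⟨hxT, ?_⟩, fun ⟨hxT, hx⟩ => ⟨?_, hxT⟩⟩
  · exact ((replacePrefix_mem_cylinder_iff Q hQ (hT x hxT)).1 hx).2
  · exact (replacePrefix_mem_cylinder_iff Q hQ (hT x hxT)).2 ⟨hQz, hx⟩

theorem preimage_replacePrefix_cylinder_inter_eq_empty {n : ℕ} (Q : V (n+1) → BratteliPath s r)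
    (hQ : ∀ w, r n ((Q w).1 n) = w) {w : V (n+1)} {T : Set (BratteliPath s r)}
    (hT : ∀ x ∈ T, r n (x.1 n) = w) {m : ℕ} {z : ∀ i, E i}
    (hQz : ¬ ∀ i < m, i ≤ n → (Q w).1 i = z i) :
    replacePrefix Q hQ ⁻¹' cylinder 0 m z ∩ T = ∅ :=
  Set.eq_empty_of_forall_notMem fun x ⟨hx, hxT⟩ =>
    hQz ((replacePrefix_mem_cylinder_iff Q hQ (hT x hxT)).1 hx).1

variable [∀ n, MeasurableSpace (E n)]

theorem measurable_coord (i : ℕ) : Measurable fun x : BratteliPath s r => x.1 i :=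
  (measurable_pi_apply i).comp measurable_subtype_coe

noncomputable def levelDensity (μ : Measure (BratteliPath s r)) (ν : ∀ n, V n → ℝ)
    (F : BratteliPath s r → ℝ≥0∞) (n : ℕ) (v : V n) : ℝ :=
  (∫⁻ x in {x | s n (x.1 n) = v}, F x ∂μ).toReal / ν n v

theorem ofReal_levelDensity_mul {μ : Measure (BratteliPath s r)} [IsFiniteMeasure μ]
    {ν : ∀ n, V n → ℝ} {F : BratteliPath s r → ℝ≥0∞} {C : ℝ}
    (hFC : ∀ x, F x ≤ ENNReal.ofReal C) {n : ℕ} {v : V n} (hv : ν n v ≠ 0) :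
    ENNReal.ofReal (levelDensity μ ν F n v * ν n v)
      = ∫⁻ x in {x | s n (x.1 n) = v}, F x ∂μ := by
  rw [levelDensity, div_mul_cancel₀ _ hv,
    ENNReal.ofReal_toReal (setLIntegral_ne_top_of_le_ofReal hFC _)]

variable [∀ n, DiscreteMeasurableSpace (E n)]

theorem measurableSet_cylinder (n m : ℕ) (z : ∀ i, E i) :
    MeasurableSet (cylinder n m z : Set (BratteliPath s r)) := by
  simp only [cylinder, Set.ofPred_forall]
  exact .iInter fun i => .iInter fun _ => measurable_coord i (measurableSet_singleton (z i))

theorem measurableSpace_eq_generateFrom_prefixCylinders [∀ n, Countable (E n)] :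
    (inferInstance : MeasurableSpace (BratteliPath s r))
      = MeasurableSpace.generateFrom prefixCylinders := by
  refine le_antisymm ?_ (MeasurableSpace.generateFrom_le ?_)
  · have hprefix : ∀ m, Measurable[MeasurableSpace.generateFrom prefixCylinders]
        fun x : BratteliPath s r => fun j : Fin m => x.1 j := fun m =>
      @measurable_to_countable _ _ _ _ (MeasurableSpace.generateFrom _) _ fun y =>
        MeasurableSpace.measurableSet_generateFrom ⟨m, y.1, by
          ext x
          simp [cylinder, funext_iff, Fin.forall_iff]⟩
    refine measurable_iff_comap_le.1
      ((@measurable_pi_iff _ _ _ (MeasurableSpace.generateFrom _) _ _).2 fun i => ?_)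
    exact (measurable_pi_apply (Fin.last i)).comp (hprefix (i+1))
  · rintro _ ⟨m, z, rfl⟩
    exact measurableSet_cylinder 0 m z

theorem measurable_replacePrefix {n : ℕ} (Q : V (n+1) → BratteliPath s r)
    (hQ : ∀ w, r n ((Q w).1 n) = w) : Measurable (replacePrefix Q hQ) := by
  refine Measurable.subtype_mk (measurable_pi_iff.2 fun i => ?_)
  by_cases hi : i ≤ n
  · simp only [hi, if_true]
    exact (Measurable.of_discrete (f := fun e : E n => (Q (r n e)).1 i)).comp (measurable_coord n)
  · simpa only [replacePrefix, hi, if_false] using measurable_coord i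

section MarkovMeasure

variable [∀ n (v : V n), Fintype {e : E n // s n e = v}]
  {p : ∀ n, E n → ℝ} {ν : ∀ n, V n → ℝ} {μ : Measure (BratteliPath s r)}
  (hsne : ∀ n (v : V n), Nonempty {e : E n // s n e = v})
  (hrne : ∀ n (w : V (n+1)), Nonempty {e : E n // r n e = w})
  (hppos : ∀ n e, 0 < p n e)
  (hpsum : ∀ n (v : V n), ∑ e : {e : E n // s n e = v}, p n e.1 = 1)
  (hμ : ∀ (z : BratteliPath s r) (m : ℕ),
      μ {x | ∀ i < m + 1, x.1 i = z.1 i} =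
        ENNReal.ofReal (ν 0 (s 0 (z.1 0))) *
        ∏ i ∈ Finset.range (m + 1), ENNReal.ofReal (p i (z.1 i)))

include hsne hrne hppos hpsum hμ

variable [Nonempty (BratteliPath s r)]

theorem measure_vertex_zero (v : V 0) :
    μ {x | s 0 (x.1 0) = v} = ENNReal.ofReal (ν 0 v) := by
  have hedge : ∀ e : {e // s 0 e = v},
      μ {x | x.1 0 = e} = ENNReal.ofReal (ν 0 v) * ENNReal.ofReal (p 0 e) := by
    rintro ⟨e, rfl⟩
    obtain ⟨y, rfl⟩ := exists_coord_eq hsne hrne e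
    simpa using hμ y 0
  have hsum := measure_inter_fiber_eq_sum (μ := μ) (measurable_coord 0) (s 0) v MeasurableSet.univ
  simp only [Set.inter_univ, hedge, ← mul_sum] at hsum
  rw [hsum, ← ENNReal.ofReal_sum_of_nonneg fun e _ => (hppos 0 e.1).le, hpsum,
    ENNReal.ofReal_one, mul_one]

variable [∀ n (w : V (n+1)), Fintype {e : E n // r n e = w}]
  (hν₀pos : ∀ v : V 0, 0 < ν 0 v)
  (hνrec : ∀ n (w : V (n+1)),
    ν (n+1) w = ∑ e : {e : E n // r n e = w}, p n e.1 * ν n (s n e.1))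

include hν₀pos hνrec

-- For `n < m` the vertex condition follows from the cylinder one; it is there so that `m = n`
-- gives the measure of the vertex set.
theorem measure_vertex_inter_cylinder (z : BratteliPath s r) {n m : ℕ} (hnm : n ≤ m) :
    μ ({x | s n (x.1 n) = s n (z.1 n)} ∩ cylinder n m z.1)
      = ENNReal.ofReal (ν n (s n (z.1 n))) * ∏ i ∈ Ico n m, ENNReal.ofReal (p i (z.1 i)) := by
  induction n generalizing m z with
  | zero =>
    rcases m with _ | m
    · rw [cylinder_eq_univ_of_le le_rfl, Set.inter_univ, Ico_self, prod_empty, mul_one]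
      exact measure_vertex_zero hsne hrne hppos hpsum hμ _
    · have hprefix : {x : BratteliPath s r | s 0 (x.1 0) = s 0 (z.1 0)} ∩ cylinder 0 (m+1) z.1
          = {x | ∀ i < m + 1, x.1 i = z.1 i} := by
        ext x
        simp only [cylinder, Set.mem_inter_iff, Set.mem_ofPred_eq, mem_Ico, zero_le, true_and]
        exact ⟨And.right, fun hx => ⟨by rw [hx 0 m.succ_pos], hx⟩⟩
      rw [hprefix, hμ z m, range_eq_Ico]
  | succ n ih =>
    set w := s (n+1) (z.1 (n+1))
    have hvertex : {x : BratteliPath s r | s (n+1) (x.1 (n+1)) = w} ∩ cylinder (n+1) m z.1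
        = {x | r n (x.1 n) = w} ∩ cylinder (n+1) m z.1 := by
      simp only [fun x : BratteliPath s r => x.2 n]
    have hedge : ∀ e : {e // r n e = w},
        μ ({x : BratteliPath s r | x.1 n = e} ∩ cylinder (n+1) m z.1)
          = ENNReal.ofReal (p n e * ν n (s n e))
            * ∏ i ∈ Ico (n+1) m, ENNReal.ofReal (p i (z.1 i)) := by
      rintro ⟨e, he⟩
      obtain ⟨y, rfl, hy⟩ := exists_prepend hrne z e he
      rw [edge_inter_cylinder hnm z.1 hy, ih y (by omega), prod_eq_prod_Ico_succ_bot hnm,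
        prod_congr rfl fun i hi => by rw [hy i (mem_Ico.1 hi).1],
        ENNReal.ofReal_mul (hppos n _).le]
      ring
    rw [hvertex,
      measure_inter_fiber_eq_sum (measurable_coord n) (r n) w (measurableSet_cylinder ..),
      sum_congr rfl fun e _ => hedge e, ← sum_mul, ← ENNReal.ofReal_sum_of_nonneg, ← hνrec]
    exact fun e _ => (mul_pos (hppos n e.1) (weight_pos_of_rec hrne hppos hν₀pos hνrec n _)).le

theorem measure_edge_inter_cylinder {n : ℕ} (e : E n) (m : ℕ) (z : ∀ i, E i) :
    ENNReal.ofReal (ν (n+1) (r n e)) * μ ({x | x.1 n = e} ∩ cylinder (n+1) m z)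
      = ENNReal.ofReal (p n e * ν n (s n e))
        * μ ({x | s (n+1) (x.1 (n+1)) = r n e} ∩ cylinder (n+1) m z) := by
  rcases ({x | s (n+1) (x.1 (n+1)) = r n e} ∩ cylinder (n+1) m z).eq_empty_or_nonempty
    with hempty | ⟨y, hyv, hyz⟩
  · have hsub : {x : BratteliPath s r | x.1 n = e} ⊆ {x | s (n+1) (x.1 (n+1)) = r n e} :=
      fun x (hx : x.1 n = e) => show _ = _ by rw [← x.2 n, hx]
    have hedge : {x | x.1 n = e} ∩ cylinder (n+1) m z = ∅ :=
      Set.subset_empty_iff.1 (hempty ▸ Set.inter_subset_inter_left _ hsub)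
    simp [hempty, hedge]
  obtain ⟨y', rfl, hy'⟩ := exists_prepend hrne y e hyv.symm
  rw [cylinder_eq_of_mem hyz, cylinder_eq_max]
  have hlt : n < max m (n+1) := by omega
  rw [edge_inter_cylinder hlt _ hy', ← hyv,
    measure_vertex_inter_cylinder hsne hrne hppos hpsum hμ hν₀pos hνrec y' hlt.le,
    measure_vertex_inter_cylinder hsne hrne hppos hpsum hμ hν₀pos hνrec y (by omega),
    prod_eq_prod_Ico_succ_bot hlt, prod_congr rfl fun i hi => by rw [hy' i (mem_Ico.1 hi).1],
    ENNReal.ofReal_mul (hppos n _).le]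
  ring

theorem map_replacePrefix_restrict_edge [∀ n, Countable (E n)] [IsFiniteMeasure μ] {n : ℕ}
    (Q : V (n+1) → BratteliPath s r) (hQ : ∀ w, r n ((Q w).1 n) = w) (e : E n) :
    (ν (n+1) (r n e)).toNNReal • (μ.restrict {x | x.1 n = e}).map (replacePrefix Q hQ)
      = (p n e * ν n (s n e)).toNNReal
        • (μ.restrict {x | s (n+1) (x.1 (n+1)) = r n e}).map (replacePrefix Q hQ) := by
  have hΦ := measurable_replacePrefix Q hQ
  have hcyl : ∀ C ∈ prefixCylinders,
      ((ν (n+1) (r n e)).toNNReal • (μ.restrict {x | x.1 n = e}).map (replacePrefix Q hQ)) C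
        = ((p n e * ν n (s n e)).toNNReal
          • (μ.restrict {x | s (n+1) (x.1 (n+1)) = r n e}).map (replacePrefix Q hQ)) C := by
    rintro _ ⟨m, z, rfl⟩
    have hA₁ : ∀ x ∈ {x : BratteliPath s r | x.1 n = e}, r n (x.1 n) = r n e :=
      fun x hx => congrArg (r n) hx
    have hA₂ : ∀ x ∈ {x : BratteliPath s r | s (n+1) (x.1 (n+1)) = r n e},
        r n (x.1 n) = r n e := fun x hx => (x.2 n).trans hx
    simp only [Measure.smul_apply, Measure.map_apply hΦ (measurableSet_cylinder 0 m z),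
      Measure.restrict_apply (hΦ (measurableSet_cylinder 0 m z)), ENNReal.smul_def, smul_eq_mul]
    by_cases hQz : ∀ i < m, i ≤ n → (Q (r n e)).1 i = z i
    · rw [preimage_replacePrefix_cylinder_inter Q hQ hA₁ hQz,
        preimage_replacePrefix_cylinder_inter Q hQ hA₂ hQz]
      exact measure_edge_inter_cylinder hsne hrne hppos hpsum hμ hν₀pos hνrec e m z
    · simp [preimage_replacePrefix_cylinder_inter_eq_empty Q hQ hA₁ hQz,
        preimage_replacePrefix_cylinder_inter_eq_empty Q hQ hA₂ hQz]
  refine ext_of_generate_finite _ measurableSpace_eq_generateFrom_prefixCylinders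
    isPiSystem_prefixCylinders hcyl ?_
  rw [← cylinder_eq_univ_of_le le_rfl (Classical.arbitrary (BratteliPath s r)).1]
  exact hcyl _ ⟨0, _, rfl⟩

theorem setLIntegral_edge [∀ n, Countable (E n)] [IsFiniteMeasure μ]
    {F : BratteliPath s r → ℝ≥0∞} (hF : Measurable F)
    (hFtail : ∀ x y : BratteliPath s r, (∃ N, ∀ i, N ≤ i → x.1 i = y.1 i) → F x = F y)
    {n : ℕ} (e : E n) :
    ENNReal.ofReal (ν (n+1) (r n e)) * ∫⁻ x in {x | x.1 n = e}, F x ∂μ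
      = ENNReal.ofReal (p n e * ν n (s n e))
        * ∫⁻ x in {x | s (n+1) (x.1 (n+1)) = r n e}, F x ∂μ := by
  choose Q hQ using fun w : V (n+1) => (hrne n w).elim fun e' =>
    (exists_coord_eq hsne hrne e'.1).imp fun y hy => hy ▸ e'.2
  have hΦ := measurable_replacePrefix Q hQ
  have hFΦ : ∀ x, F (replacePrefix Q hQ x) = F x := fun x =>
    hFtail _ _ ⟨n+1, fun i hi => replacePrefix_of_lt Q hQ (by omega)⟩
  have hmap := congrArg (fun M => ∫⁻ x, F x ∂M)
    (map_replacePrefix_restrict_edge hsne hrne hppos hpsum hμ hν₀pos hνrec Q hQ e)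
  simp only [lintegral_smul_measure, lintegral_map hF hΦ, hFΦ, ENNReal.smul_def,
    smul_eq_mul] at hmap
  exact hmap

theorem measure_vertex (n : ℕ) (v : V n) :
    μ {x | s n (x.1 n) = v} = ENNReal.ofReal (ν n v) := by
  obtain ⟨⟨e, rfl⟩⟩ := hsne n v
  obtain ⟨y, rfl⟩ := exists_coord_eq hsne hrne e
  simpa [cylinder_eq_univ_of_le le_rfl] using
    measure_vertex_inter_cylinder hsne hrne hppos hpsum hμ hν₀pos hνrec y le_rfl

theorem levelDensity_le {F : BratteliPath s r → ℝ≥0∞} {C : ℝ}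
    (hFC : ∀ x, F x ≤ ENNReal.ofReal C) (hC : 0 ≤ C) (n : ℕ) (v : V n) :
    levelDensity μ ν F n v ≤ C := by
  have hν := weight_pos_of_rec hrne hppos hν₀pos hνrec n v
  have hle : ∫⁻ x in {x | s n (x.1 n) = v}, F x ∂μ ≤ ENNReal.ofReal (C * ν n v) := by
    calc ∫⁻ x in {x | s n (x.1 n) = v}, F x ∂μ
        ≤ ∫⁻ _ in {x | s n (x.1 n) = v}, ENNReal.ofReal C ∂μ := lintegral_mono hFC
      _ = ENNReal.ofReal (C * ν n v) := by
        rw [setLIntegral_const, measure_vertex hsne hrne hppos hpsum hμ hν₀pos hνrec,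
          ENNReal.ofReal_mul hC]
  rw [levelDensity, div_le_iff₀ hν]
  exact ENNReal.toReal_le_of_le_ofReal (mul_nonneg hC hν.le) hle

theorem levelDensity_eq_sum [∀ n, Countable (E n)] [IsFiniteMeasure μ]
    {F : BratteliPath s r → ℝ≥0∞} {C : ℝ} (hFC : ∀ x, F x ≤ ENNReal.ofReal C)
    (hF : Measurable F)
    (hFtail : ∀ x y : BratteliPath s r, (∃ N, ∀ i, N ≤ i → x.1 i = y.1 i) → F x = F y)
    (n : ℕ) (v : V n) :
    levelDensity μ ν F n v
      = ∑ e : {e : E n // s n e = v}, p n e.1 * levelDensity μ ν F (n+1) (r n e.1) := by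
  have hν := weight_pos_of_rec hrne hppos hν₀pos hνrec
  have hedge : ∀ e : {e : E n // s n e = v},
      (∫⁻ x in {x | x.1 n = e}, F x ∂μ).toReal / ν n v
        = p n e * levelDensity μ ν F (n+1) (r n e) := by
    rintro ⟨e, rfl⟩
    have h := congrArg ENNReal.toReal
      (setLIntegral_edge hsne hrne hppos hpsum hμ hν₀pos hνrec hF hFtail e)
    rw [ENNReal.toReal_mul, ENNReal.toReal_mul, ENNReal.toReal_ofReal (hν _ _).le,
      ENNReal.toReal_ofReal (mul_pos (hppos n e) (hν n _)).le] at h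
    have := hν n (s n e)
    have := hν (n+1) (r n e)
    rw [levelDensity, div_eq_iff (by positivity)]
    field_simp
    linarith
  rw [levelDensity, setLIntegral_fiber_eq_sum (measurable_coord n) (s n) v F,
    ENNReal.toReal_sum fun e _ => setLIntegral_ne_top_of_le_ofReal hFC _, sum_div]
  exact sum_congr rfl fun e _ => hedge e

end MarkovMeasure

end BratteliPath

theorem stmt14_general (V E : ℕ → Type)
    [∀ n, Countable (E n)]
    [∀ n, MeasurableSpace (E n)] [∀ n, DiscreteMeasurableSpace (E n)]
    (s : ∀ n, E n → V n) (r : ∀ n, E n → V (n+1))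
    [∀ (n : ℕ) (v : V n), Fintype {e : E n // s n e = v}]
    [∀ (n : ℕ) (w : V (n+1)), Fintype {e : E n // r n e = w}]
    (hsne : ∀ n (v : V n), Nonempty {e : E n // s n e = v})
    (hrne : ∀ n (w : V (n+1)), Nonempty {e : E n // r n e = w})
    (p : ∀ n, E n → ℝ) (hppos : ∀ n e, 0 < p n e)
    (hpsum : ∀ n (v : V n), ∑ e : {e : E n // s n e = v}, p n e.1 = 1)
    (ν : ∀ n, V n → ℝ) (hν₀pos : ∀ v : V 0, 0 < ν 0 v)
    (hνrec : ∀ n (w : V (n+1)),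
      ν (n+1) w = ∑ e : {e : E n // r n e = w}, p n e.1 * ν n (s n e.1))
    (μ : Measure {x : (k : ℕ) → E k // ∀ k, r k (x k) = s (k+1) (x (k+1))})
    [IsProbabilityMeasure μ]
    (hμ : ∀ (z : {x : (k : ℕ) → E k // ∀ k, r k (x k) = s (k+1) (x (k+1))}) (m : ℕ),
      μ {x | ∀ i < m + 1, x.1 i = z.1 i} =
        ENNReal.ofReal (ν 0 (s 0 (z.1 0))) *
        ∏ i ∈ Finset.range (m + 1), ENNReal.ofReal (p i (z.1 i)))
    (f : {x : (k : ℕ) → E k // ∀ k, r k (x k) = s (k+1) (x (k+1))} → ℝ)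
    (hfmeas : Measurable f) (hfnonneg : ∀ x, 0 ≤ f x)
    (C : ℝ) (hfbdd : ∀ x, f x ≤ C)
    (hfinv : ∀ x y, (∃ N, ∀ i, N ≤ i → x.1 i = y.1 i) → f x = f y) :
    ∃ h : (n : ℕ) → V n → ℝ,
      -- h_n is the density of (r_n)_*(fμ) with respect to ν_n
      (∀ v : V 0, ENNReal.ofReal (h 0 v * ν 0 v) =
        ∫⁻ x in {x | s 0 (x.1 0) = v}, ENNReal.ofReal (f x) ∂μ) ∧
      (∀ n (w : V (n+1)), ENNReal.ofReal (h (n+1) w * ν (n+1) w) =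
        ∫⁻ x in {x | r n (x.1 n) = w}, ENNReal.ofReal (f x) ∂μ) ∧
      -- the sequence (h_n) is harmonic
      (∀ n (v : V n),
        h n v = ∑ e : {e : E n // s n e = v}, p n e.1 * h (n+1) (r n e.1)) ∧
      -- and bounded by ‖f‖_∞
      (∀ n (v : V n), 0 ≤ h n v ∧ h n v ≤ C) := by
  have := nonempty_of_isProbabilityMeasure μ
  have hν := weight_pos_of_rec hrne hppos hν₀pos hνrec
  have hC : 0 ≤ C := (hfnonneg (Classical.arbitrary _)).trans (hfbdd _)
  have hFC : ∀ x, ENNReal.ofReal (f x) ≤ ENNReal.ofReal C :=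
    fun x => ENNReal.ofReal_le_ofReal (hfbdd x)
  have hvertex : ∀ n (w : V (n+1)), {x : BratteliPath s r | r n (x.1 n) = w}
      = {x | s (n+1) (x.1 (n+1)) = w} := fun n w => by
    simp only [fun x : BratteliPath s r => x.2 n]
  refine ⟨BratteliPath.levelDensity μ ν fun x => ENNReal.ofReal (f x),
    fun v => BratteliPath.ofReal_levelDensity_mul hFC (hν 0 v).ne',
    fun n w => by rw [hvertex, BratteliPath.ofReal_levelDensity_mul hFC (hν (n+1) w).ne'],
    BratteliPath.levelDensity_eq_sum hsne hrne hppos hpsum hμ hν₀pos hνrec hFC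
      hfmeas.ennreal_ofReal fun x y hxy => by rw [hfinv x y hxy],
    fun n v => ⟨div_nonneg ENNReal.toReal_nonneg (hν n v).le,
      BratteliPath.levelDensity_le hsne hrne hppos hpsum hμ hν₀pos hνrec hFC hC n v⟩⟩

/-- If `f` is a bounded nonnegative tail-invariant function on the path space of
a full-support random walk on a Bratteli diagram, then the densities `h_n` of
the pushforwards of `f·μ` under the level maps (i.e. `h_n ν_n = (r_n)_*(fμ)`)
form a bounded harmonic sequence: `h_n(v) = Σ_{s(e)=v} p(e) h_{n+1}(r(e))` and
`0 ≤ h_n ≤ ‖f‖_∞`. -/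
theorem stmt14 (V E : ℕ → Type)
    [∀ n, Countable (V n)] [∀ n, Countable (E n)]
    [∀ n, MeasurableSpace (E n)] [∀ n, DiscreteMeasurableSpace (E n)]
    (s : ∀ n, E n → V n) (r : ∀ n, E n → V (n+1))
    [∀ (n : ℕ) (v : V n), Fintype {e : E n // s n e = v}]
    [∀ (n : ℕ) (w : V (n+1)), Fintype {e : E n // r n e = w}]
    (hsne : ∀ n (v : V n), Nonempty {e : E n // s n e = v})
    (hrne : ∀ n (w : V (n+1)), Nonempty {e : E n // r n e = w})
    (p : ∀ n, E n → ℝ) (hppos : ∀ n e, 0 < p n e)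
    (hpsum : ∀ n (v : V n), ∑ e : {e : E n // s n e = v}, p n e.1 = 1)
    (ν : ∀ n, V n → ℝ) (hν₀pos : ∀ v : V 0, 0 < ν 0 v)
    (hν₀sum : ∑' v : V 0, ν 0 v = 1)
    (hνrec : ∀ n (w : V (n+1)),
      ν (n+1) w = ∑ e : {e : E n // r n e = w}, p n e.1 * ν n (s n e.1))
    (μ : Measure {x : (k : ℕ) → E k // ∀ k, r k (x k) = s (k+1) (x (k+1))})
    [IsProbabilityMeasure μ]
    (hμ : ∀ (z : {x : (k : ℕ) → E k // ∀ k, r k (x k) = s (k+1) (x (k+1))}) (m : ℕ),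
      μ {x | ∀ i < m + 1, x.1 i = z.1 i} =
        ENNReal.ofReal (ν 0 (s 0 (z.1 0))) *
        ∏ i ∈ Finset.range (m + 1), ENNReal.ofReal (p i (z.1 i)))
    (f : {x : (k : ℕ) → E k // ∀ k, r k (x k) = s (k+1) (x (k+1))} → ℝ)
    (hfmeas : Measurable f) (hfnonneg : ∀ x, 0 ≤ f x)
    (C : ℝ) (hfbdd : ∀ x, f x ≤ C)
    (hfinv : ∀ x y, (∃ N, ∀ i, N ≤ i → x.1 i = y.1 i) → f x = f y) :
    ∃ h : (n : ℕ) → V n → ℝ,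
      -- h_n is the density of (r_n)_*(fμ) with respect to ν_n
      (∀ v : V 0, ENNReal.ofReal (h 0 v * ν 0 v) =
        ∫⁻ x in {x | s 0 (x.1 0) = v}, ENNReal.ofReal (f x) ∂μ) ∧
      (∀ n (w : V (n+1)), ENNReal.ofReal (h (n+1) w * ν (n+1) w) =
        ∫⁻ x in {x | r n (x.1 n) = w}, ENNReal.ofReal (f x) ∂μ) ∧
      -- the sequence (h_n) is harmonic
      (∀ n (v : V n),
        h n v = ∑ e : {e : E n // s n e = v}, p n e.1 * h (n+1) (r n e.1)) ∧
      -- and bounded by ‖f‖_∞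
      (∀ n (v : V n), 0 ≤ h n v ∧ h n v ≤ C) :=
  stmt14_general V E s r hsne hrne p hppos hpsum ν hν₀pos hνrec μ hμ f hfmeas hfnonneg C hfbdd hfinv
end

section
/- For a UHF Bratteli diagram over a discrete group G (one vertex at each level, E(n) = G_n a finite subset of G), with constant transition probabilities p_n = (1−t)δ_0 + tδ_1 on G = ℤ with G_n = {0,1}: every bounded harmonic sequence for the skew-product (kernel) diagram with initial measure δ_0 is constant. Concretely: if h_n : {0,…,n} → ℂ is bounded uniformly in n and satisfies h_{n-1}(k) = (1−t)h_n(k) + t·h_n(k+1) for all 0 ≤ k ≤ n−1, n ≥ 1, then h_n(k) = h_0(0) for all n and all 0 ≤ k ≤ n. -/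
/-!
Iterating the harmonicity relation `m` times writes `h n k` as the average of the values
`h (n + m) (k + j)` against the binomial weights `B_{m,j}(t) = (m choose j) t^j (1-t)^(m-j)`,
i.e. Bernstein polynomials. Subtracting these representations for `k + 1` and `k` and summing by
parts gives `(m + 1) (h n (k + 1) - h n k) = ∑ᵢ B'_{m+1,i}(t) h (n + m) (k + i)`. Since
`t (1 - t) B'_{N,i}(t) = (i - N t) B_{N,i}(t)`, Cauchy–Schwarz against the binomial variance
`N t (1 - t)` bounds `∑ᵢ |B'_{N,i}(t)|` by `√(N / (t (1 - t)))`, so a bounded harmonic `h`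
satisfies `‖h n (k + 1) - h n k‖ ≤ C / √((m + 1) t (1 - t)) → 0`. Hence every row is constant,
and harmonicity at `k = 0` then makes consecutive rows agree.
-/

open Polynomial Finset Filter Topology

theorem Polynomial.mul_derivative_pow {R : Type*} [CommRing R] (p : R[X]) (a : ℕ) :
    p * derivative (p ^ a) = a * p ^ a * derivative p := by
  cases a with
  | zero => simp
  | succ a => rw [derivative_pow_succ, ← C_eq_natCast]; simp only [Nat.cast_succ, C_add, C_1]; ring

namespace bernsteinPolynomial

variable {R : Type*} [CommRing R]

theorem succ_zero (n : ℕ) :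
    bernsteinPolynomial R (n + 1) 0 = (1 - X) * bernsteinPolynomial R n 0 := by
  simp [bernsteinPolynomial, pow_succ, mul_comm]

theorem succ_succ (n ν : ℕ) :
    bernsteinPolynomial R (n + 1) (ν + 1) =
      (1 - X) * bernsteinPolynomial R n (ν + 1) + X * bernsteinPolynomial R n ν := by
  rcases lt_or_ge ν n with h | h
  · obtain ⟨d, rfl⟩ : ∃ d, n = ν + 1 + d := ⟨n - (ν + 1), by omega⟩
    simp only [bernsteinPolynomial, Nat.choose_succ_succ', Nat.cast_add,
      show ν + 1 + d + 1 - (ν + 1) = d + 1 by omega, show ν + 1 + d - (ν + 1) = d by omega,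
      show ν + 1 + d - ν = d + 1 by omega]
    ring
  · simp only [bernsteinPolynomial, Nat.choose_succ_succ', Nat.cast_add,
      Nat.choose_eq_zero_of_lt (Nat.lt_succ_of_le h), Nat.succ_sub_succ]
    ring

theorem X_mul_one_sub_X_mul_derivative (n ν : ℕ) :
    X * (1 - X) * derivative (bernsteinPolynomial R n ν) =
      ((ν : R[X]) - (n : R[X]) * X) * bernsteinPolynomial R n ν := by
  rcases lt_or_ge n ν with h | h
  · simp [eq_zero_of_lt R h]
  obtain ⟨d, rfl⟩ : ∃ d, n = ν + d := ⟨n - ν, by omega⟩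
  have hX := mul_derivative_pow (X : R[X]) ν
  have hY := mul_derivative_pow (1 - X : R[X]) d
  simp only [derivative_X, derivative_sub, derivative_one, mul_one] at hX hY
  simp only [bernsteinPolynomial, Nat.add_sub_cancel_left, derivative_mul, derivative_natCast,
    Nat.cast_add]
  linear_combination ((ν + d).choose ν : R[X]) * ((1 - X) * (1 - X) ^ d * hX + X * X ^ ν * hY)

section Module

variable {E : Type*} [AddCommGroup E] [Module R E]

theorem sum_range_succ'_eval_smul (t : R) (m : ℕ) (g : ℕ → E) :
    ∑ j ∈ range (m + 1), (bernsteinPolynomial R m j).eval t • g j =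
      ∑ j ∈ range (m + 1), (bernsteinPolynomial R m (j + 1)).eval t • g (j + 1) +
        (bernsteinPolynomial R m 0).eval t • g 0 := by
  rw [← sum_range_succ' (fun j => (bernsteinPolynomial R m j).eval t • g j),
    sum_range_succ _ (m + 1), eq_zero_of_lt R m.lt_succ_self, eval_zero, zero_smul, add_zero]

theorem sum_eval_smul_succ (t : R) (m : ℕ) (g : ℕ → E) :
    ∑ j ∈ range (m + 2), (bernsteinPolynomial R (m + 1) j).eval t • g j =
      ∑ j ∈ range (m + 1),
        (bernsteinPolynomial R m j).eval t • ((1 - t) • g j + t • g (j + 1)) := by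
  have hstep : ∀ j, (bernsteinPolynomial R (m + 1) (j + 1)).eval t • g (j + 1) =
      (1 - t) • ((bernsteinPolynomial R m (j + 1)).eval t • g (j + 1)) +
        t • ((bernsteinPolynomial R m j).eval t • g (j + 1)) := fun j => by
    simp only [succ_succ, eval_add, eval_mul, eval_sub, eval_one, eval_X, add_smul, mul_smul]
  simp only [smul_add, smul_comm _ (1 - t), smul_comm _ t, sum_add_distrib, ← smul_sum,
    sum_range_succ'_eval_smul t m g, sum_range_succ' _ (m + 1), hstep, succ_zero, eval_mul,
    eval_sub, eval_one, eval_X, mul_smul]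
  module

theorem sum_eval_derivative_smul (t : R) (m : ℕ) (g : ℕ → E) :
    ∑ i ∈ range (m + 2), (derivative (bernsteinPolynomial R (m + 1) i)).eval t • g i =
      ((m : R) + 1) • (∑ j ∈ range (m + 1), (bernsteinPolynomial R m j).eval t • g (j + 1) -
        ∑ j ∈ range (m + 1), (bernsteinPolynomial R m j).eval t • g j) := by
  simp only [sum_range_succ'_eval_smul t m g, sum_range_succ' _ (m + 1), derivative_succ_aux,
    derivative_zero, eval_mul, eval_sub, eval_neg, eval_natCast, eval_add, eval_one, sub_smul,
    mul_smul, ← smul_sum, sum_sub_distrib, Nat.add_sub_cancel, Nat.cast_add, Nat.cast_one]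
  module

end Module


theorem eval_nonneg {t : ℝ} (ht0 : 0 ≤ t) (ht1 : t ≤ 1) (n ν : ℕ) :
    0 ≤ (bernsteinPolynomial ℝ n ν).eval t := by
  have : 0 ≤ 1 - t := by linarith
  simp only [bernsteinPolynomial, eval_mul, eval_pow, eval_natCast, eval_sub, eval_one, eval_X]
  positivity

theorem sq_sum_abs_eval_derivative_le {t : ℝ} (ht0 : 0 < t) (ht1 : t < 1) (n : ℕ) :
    (∑ ν ∈ range (n + 1), |(derivative (bernsteinPolynomial ℝ n ν)).eval t|) ^ 2 ≤
      n / (t * (1 - t)) := by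
  have hv : 0 < t * (1 - t) := mul_pos ht0 (by linarith)
  have hB := eval_nonneg ht0.le ht1.le n
  have hderiv : ∀ ν, |(derivative (bernsteinPolynomial ℝ n ν)).eval t| =
      |(ν : ℝ) - n * t| * (bernsteinPolynomial ℝ n ν).eval t / (t * (1 - t)) := fun ν => by
    have := congrArg (eval t) (X_mul_one_sub_X_mul_derivative (R := ℝ) n ν)
    simp only [eval_mul, eval_sub, eval_one, eval_X, eval_natCast] at this
    rw [eq_div_iff hv.ne', ← abs_of_nonneg (hB ν), ← abs_mul, ← this, abs_mul, abs_of_pos hv,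
      mul_comm]
  have hcs : (∑ ν ∈ range (n + 1), |(ν : ℝ) - n * t| * (bernsteinPolynomial ℝ n ν).eval t) ^ 2 ≤
      (∑ ν ∈ range (n + 1), (bernsteinPolynomial ℝ n ν).eval t) *
        ∑ ν ∈ range (n + 1), ((ν : ℝ) - n * t) ^ 2 * (bernsteinPolynomial ℝ n ν).eval t :=
    sum_sq_le_sum_mul_sum_of_sq_le_mul _ (fun ν _ => hB ν)
      (fun ν _ => mul_nonneg (sq_nonneg _) (hB ν))
      (fun ν _ => by rw [mul_pow, sq_abs]; exact le_of_eq (by ring))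
  have hsum : ∑ ν ∈ range (n + 1), (bernsteinPolynomial ℝ n ν).eval t = 1 := by
    simpa [eval_finsetSum] using congrArg (eval t) (sum ℝ n)
  have hvar : ∑ ν ∈ range (n + 1), ((ν : ℝ) - n * t) ^ 2 * (bernsteinPolynomial ℝ n ν).eval t =
      n * (t * (1 - t)) := by
    have := congrArg (eval t) (variance ℝ n)
    simp only [eval_finsetSum, eval_mul, eval_pow, eval_sub, eval_natCast, eval_X,
      eval_one, nsmul_eq_mul] at this
    rw [← mul_assoc, ← this]
    exact sum_congr rfl fun ν _ => by ring
  rw [sum_congr rfl fun ν _ => hderiv ν, ← sum_div, div_pow]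
  calc _ ≤ n * (t * (1 - t)) / (t * (1 - t)) ^ 2 := by
        gcongr
        simpa [hsum, hvar] using hcs
    _ = n / (t * (1 - t)) := by field_simp

end bernsteinPolynomial

def IsPascalHarmonic {R E : Type*} [CommRing R] [AddCommGroup E] [Module R E] (t : R)
    (h : ℕ → ℕ → E) : Prop :=
  ∀ n k, k ≤ n → h n k = (1 - t) • h (n + 1) k + t • h (n + 1) (k + 1)

namespace IsPascalHarmonic

section Module

variable {R E : Type*} [CommRing R] [AddCommGroup E] [Module R E] {t : R} {h : ℕ → ℕ → E}

theorem eq_sum_bernstein (hh : IsPascalHarmonic t h) (m : ℕ) {n k : ℕ} (hk : k ≤ n) :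
    h n k = ∑ j ∈ range (m + 1), (bernsteinPolynomial R m j).eval t • h (n + m) (k + j) := by
  induction m with
  | zero => simp [bernsteinPolynomial]
  | succ m ih =>
    rw [ih, ← add_assoc n m 1, bernsteinPolynomial.sum_eval_smul_succ]
    refine sum_congr rfl fun j hj => ?_
    rw [hh (n + m) (k + j) (by simp at hj; omega), add_assoc k j 1]

theorem smul_sub_eq_sum_derivative (hh : IsPascalHarmonic t h) (m : ℕ) {n k : ℕ} (hk : k < n) :
    ((m : R) + 1) • (h n (k + 1) - h n k) =
      ∑ i ∈ range (m + 2),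
        (derivative (bernsteinPolynomial R (m + 1) i)).eval t • h (n + m) (k + i) := by
  rw [bernsteinPolynomial.sum_eval_derivative_smul, hh.eq_sum_bernstein m hk,
    hh.eq_sum_bernstein m hk.le]
  simp only [add_right_comm k 1, add_assoc k]

end Module

section Normed

variable {E : Type*} [NormedAddCommGroup E] [NormedSpace ℝ E] {t : ℝ} {h : ℕ → ℕ → E} {C : ℝ}

theorem norm_sub_sq_le (hh : IsPascalHarmonic t h) (ht0 : 0 < t) (ht1 : t < 1)
    (hC : ∀ n k, k ≤ n → ‖h n k‖ ≤ C) (m : ℕ) {n k : ℕ} (hk : k < n) :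
    ‖h n (k + 1) - h n k‖ ^ 2 ≤ C ^ 2 / (t * (1 - t)) * (1 / ((m : ℝ) + 1)) := by
  set S := ∑ i ∈ range (m + 2), |(derivative (bernsteinPolynomial ℝ (m + 1) i)).eval t|
  have hm : (0 : ℝ) < m + 1 := by positivity
  have hnorm : ((m : ℝ) + 1) * ‖h n (k + 1) - h n k‖ ≤ S * C := by
    calc ((m : ℝ) + 1) * ‖h n (k + 1) - h n k‖
        = ‖((m : ℝ) + 1) • (h n (k + 1) - h n k)‖ := by
          rw [norm_smul, Real.norm_of_nonneg hm.le]
      _ ≤ ∑ i ∈ range (m + 2),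
            ‖(derivative (bernsteinPolynomial ℝ (m + 1) i)).eval t • h (n + m) (k + i)‖ := by
          rw [hh.smul_sub_eq_sum_derivative m hk]
          exact norm_sum_le _ _
      _ ≤ S * C := by
          rw [sum_mul]
          refine sum_le_sum fun i hi => ?_
          rw [norm_smul, Real.norm_eq_abs]
          exact mul_le_mul_of_nonneg_left (hC _ _ (by simp at hi; omega)) (abs_nonneg _)
  have hS : S ^ 2 ≤ ((m : ℝ) + 1) / (t * (1 - t)) := by
    simpa using bernsteinPolynomial.sq_sum_abs_eval_derivative_le ht0 ht1 (m + 1)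
  have hsq : ((m : ℝ) + 1) ^ 2 * ‖h n (k + 1) - h n k‖ ^ 2 ≤ C ^ 2 * ((m + 1) / (t * (1 - t))) :=
    calc _ = (((m : ℝ) + 1) * ‖h n (k + 1) - h n k‖) ^ 2 := by ring
      _ ≤ (S * C) ^ 2 := pow_le_pow_left₀ (by positivity) hnorm 2
      _ = C ^ 2 * S ^ 2 := by ring
      _ ≤ _ := mul_le_mul_of_nonneg_left hS (sq_nonneg C)
  rw [show C ^ 2 / (t * (1 - t)) * (1 / ((m : ℝ) + 1)) =
      C ^ 2 * ((m + 1) / (t * (1 - t))) / ((m : ℝ) + 1) ^ 2 by field_simp,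
    le_div_iff₀ (by positivity)]
  linarith

theorem eq_succ_of_bounded (hh : IsPascalHarmonic t h) (ht0 : 0 < t) (ht1 : t < 1)
    (hC : ∀ n k, k ≤ n → ‖h n k‖ ≤ C) {n k : ℕ} (hk : k < n) : h n (k + 1) = h n k := by
  have hlim : Tendsto (fun m : ℕ => C ^ 2 / (t * (1 - t)) * (1 / ((m : ℝ) + 1))) atTop (𝓝 0) := by
    simpa only [mul_zero] using
      (tendsto_one_div_add_atTop_nhds_zero_nat (𝕜 := ℝ)).const_mul (C ^ 2 / (t * (1 - t)))
  have hle := ge_of_tendsto' hlim fun m => hh.norm_sub_sq_le ht0 ht1 hC m hk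
  rw [← sub_eq_zero, ← norm_eq_zero]
  exact pow_eq_zero_iff two_ne_zero |>.1 (le_antisymm hle (sq_nonneg _))

theorem eq_of_bounded (hh : IsPascalHarmonic t h) (ht0 : 0 < t) (ht1 : t < 1)
    (hC : ∀ n k, k ≤ n → ‖h n k‖ ≤ C) : ∀ n k, k ≤ n → h n k = h 0 0 := by
  have hrow : ∀ n k, k ≤ n → h n k = h n 0 := by
    intro n k
    induction k with
    | zero => intro _; rfl
    | succ k ih => intro hk; rw [hh.eq_succ_of_bounded ht0 ht1 hC hk, ih (by omega)]
  have hcol : ∀ n, h n 0 = h 0 0 := by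
    intro n
    induction n with
    | zero => rfl
    | succ n ih =>
      rw [← ih, hh n 0 n.zero_le, zero_add, hrow (n + 1) 1 (by omega), ← add_smul,
        sub_add_cancel, one_smul]
  exact fun n k hk => (hrow n k hk).trans (hcol n)

end Normed

end IsPascalHarmonic

/-- Triviality of the tail boundary of the time-dependent Bernoulli random walk
on `ℤ` (Pascal triangle): every bounded harmonic sequence
`h_{n}(k) = (1-t)h_{n+1}(k) + t·h_{n+1}(k+1)` (for `0 < t < 1`) is constant. -/
theorem stmt16 (t : ℝ) (ht0 : 0 < t) (ht1 : t < 1)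
    (h : ℕ → ℕ → ℂ) (C : ℝ)
    (hbdd : ∀ n k, k ≤ n → ‖h n k‖ ≤ C)
    (hharm : ∀ n k, k ≤ n →
      h n k = (1 - t : ℂ) * h (n+1) k + (t : ℂ) * h (n+1) (k+1)) :
    ∀ n k, k ≤ n → h n k = h 0 0 := by
  have hh : IsPascalHarmonic t h := fun n k hk => by
    rw [hharm n k hk, Complex.real_smul, Complex.real_smul, Complex.ofReal_sub, Complex.ofReal_one]
  exact hh.eq_of_bounded ht0 ht1 hbdd
end
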